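/- For α > 0 and x, μ ∈ ℝ, (1/α)·exp(−α|x−μ|) = ∫₀^∞ (1/√(2πν)) · exp(−((x−μ)²/(2ν) + α²·ν/2)) dν. -/

import Mathlib

/-!
Substituting `ν = t ^ 2` and completing the square turns the integrand into
`(2 / √(2π)) e^{-α|x - μ|} exp (-(α² / 2) (t - c / t) ²)` with `c = |x - μ| / α`.
By the Cauchy–Schlömilch transformation, `∫₀^∞ g (t - c / t) dt = ½ ∫ g` for even integrable
`g`: the substitution `u = t - c / t` maps `(0, ∞)` onto `ℝ` with Jacobian `1 + c / t²`, and
the inversion `t ↦ c / t` shows that the two summands of the Jacobian contribute equally.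
What remains is the Gaussian integral `∫ exp (-(α² / 2) u²) = √(2π) / α`.
-/

open MeasureTheory Real Set

section

variable {E : Type*} [NormedAddCommGroup E] [NormedSpace ℝ E] {c : ℝ}

lemma hasDerivAt_sub_div (c : ℝ) {t : ℝ} (ht : t ≠ 0) :
    HasDerivAt (fun s => s - c / s) (1 + c / t ^ 2) t := by
  have h := (hasDerivAt_id' t).sub ((hasDerivAt_inv ht).const_mul c)
  simpa only [← div_eq_mul_inv, mul_neg, sub_neg_eq_add, Pi.sub_def] using h

lemma hasDerivAt_const_div (c : ℝ) {t : ℝ} (ht : t ≠ 0) :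
    HasDerivAt (fun s => c / s) (-(c / t ^ 2)) t := by
  simpa only [← div_eq_mul_inv, mul_neg] using (hasDerivAt_inv ht).const_mul c

lemma strictMonoOn_sub_div (hc : 0 < c) : StrictMonoOn (fun t => t - c / t) (Ioi 0) := by
  intro p hp q _ hpq
  have := div_lt_div_of_pos_left hc hp hpq
  dsimp only
  linarith

lemma image_sub_div_Ioi (hc : 0 < c) : (fun t => t - c / t) '' Ioi 0 = univ := by
  refine eq_univ_of_forall fun u => ?_
  -- `t - c / t = u` at the positive root of `t ^ 2 - u t - c`
  set s := √(u ^ 2 + 4 * c)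
  have hs : s ^ 2 = u ^ 2 + 4 * c := Real.sq_sqrt (by positivity)
  have hpos : 0 < u + s := by nlinarith [Real.sqrt_nonneg (u ^ 2 + 4 * c)]
  refine ⟨(u + s) / 2, half_pos hpos, ?_⟩
  field_simp
  nlinarith

lemma integral_Ioi_one_add_div_sq_smul_comp_sub_div (hc : 0 < c) (g : ℝ → E) :
    ∫ t in Ioi 0, (1 + c / t ^ 2) • g (t - c / t) = ∫ u, g u := by
  have h := integral_image_eq_integral_abs_deriv_smul measurableSet_Ioi
    (fun t ht => (hasDerivAt_sub_div c (ne_of_gt ht)).hasDerivWithinAt)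
    (strictMonoOn_sub_div hc).injOn g
  rw [image_sub_div_Ioi hc, setIntegral_univ] at h
  rw [h]
  refine setIntegral_congr_fun measurableSet_Ioi fun t (ht : 0 < t) => ?_
  rw [abs_of_pos (by positivity : 0 < 1 + c / t ^ 2)]

lemma integrableOn_Ioi_one_add_div_sq_smul_comp_sub_div (hc : 0 < c) {g : ℝ → E}
    (hg : Integrable g) : IntegrableOn (fun t => (1 + c / t ^ 2) • g (t - c / t)) (Ioi 0) := by
  have h := (integrableOn_image_iff_integrableOn_abs_deriv_smul measurableSet_Ioi
    (fun t ht => (hasDerivAt_sub_div c (ne_of_gt ht)).hasDerivWithinAt)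
    (strictMonoOn_sub_div hc).injOn g).mp (by rw [image_sub_div_Ioi hc]; exact hg.integrableOn)
  refine h.congr_fun (fun t (ht : 0 < t) => ?_) measurableSet_Ioi
  dsimp only
  rw [abs_of_pos (by positivity : 0 < 1 + c / t ^ 2)]

lemma integral_Ioi_div_sq_smul_comp_div (hc : 0 < c) (f : ℝ → E) :
    ∫ t in Ioi 0, (c / t ^ 2) • f (c / t) = ∫ t in Ioi 0, f t := by
  have hinj : InjOn (fun s => c / s) (Ioi 0) := by
    intro p _ q _ h
    simpa [div_eq_mul_inv, hc.ne'] using h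
  have himg : (fun s => c / s) '' Ioi 0 = Ioi 0 := by
    ext t
    refine ⟨?_, fun ht => ⟨c / t, div_pos hc ht, div_div_cancel₀ hc.ne'⟩⟩
    rintro ⟨s, hs, rfl⟩
    exact div_pos hc hs
  conv_rhs => rw [← himg, integral_image_eq_integral_abs_deriv_smul measurableSet_Ioi
    (fun t ht => (hasDerivAt_const_div c (ne_of_gt ht)).hasDerivWithinAt) hinj]
  refine setIntegral_congr_fun measurableSet_Ioi fun t (ht : 0 < t) => ?_
  rw [abs_neg, abs_of_pos (by positivity : 0 < c / t ^ 2)]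

lemma integral_Ioi_comp_sub_div_of_even (hc : 0 < c) {g : ℝ → E} (hg : Integrable g)
    (hg_even : ∀ u, g (-u) = g u) :
    ∫ t in Ioi 0, g (t - c / t) = (2 : ℝ)⁻¹ • ∫ u, g u := by
  have hjac := integrableOn_Ioi_one_add_div_sq_smul_comp_sub_div hc hg
  have hint : IntegrableOn (fun t => g (t - c / t)) (Ioi 0) := by
    have hbound : ∀ t : ℝ, ‖(1 + c / t ^ 2)⁻¹‖ ≤ 1 := fun t => by
      rw [norm_inv, Real.norm_of_nonneg (by positivity)]
      exact inv_le_one_of_one_le₀ (le_add_of_nonneg_right (by positivity))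
    have hmeas : Measurable fun t : ℝ => (1 + c / t ^ 2)⁻¹ := by fun_prop
    refine IntegrableOn.congr_fun (hjac.bdd_smul 1 hmeas.aestronglyMeasurable (.of_forall hbound))
      (fun t (ht : 0 < t) => ?_) measurableSet_Ioi
    simp only [Pi.smul_apply', smul_smul, inv_mul_cancel₀ (by positivity : 1 + c / t ^ 2 ≠ 0),
      one_smul]
  have hint' : IntegrableOn (fun t => (c / t ^ 2) • g (t - c / t)) (Ioi 0) := by
    refine (hjac.sub hint).congr_fun (fun t _ => ?_) measurableSet_Ioi
    simp only [Pi.sub_apply, add_smul, one_smul, add_sub_cancel_left]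
  -- `t ↦ c / t` preserves `Ioi 0` and sends `t - c / t` to its negative
  have hsymm : ∫ t in Ioi 0, (c / t ^ 2) • g (t - c / t) = ∫ t in Ioi 0, g (t - c / t) := by
    rw [← integral_Ioi_div_sq_smul_comp_div hc (fun t => g (t - c / t))]
    refine setIntegral_congr_fun measurableSet_Ioi fun t (ht : 0 < t) => ?_
    rw [div_div_cancel₀ hc.ne', ← neg_sub, hg_even]
  rw [← integral_Ioi_one_add_div_sq_smul_comp_sub_div hc]
  simp only [add_smul, one_smul]
  rw [integral_add hint hint', hsymm, ← two_smul ℝ, smul_smul, inv_mul_cancel₀ two_ne_zero,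
    one_smul]

lemma integral_Ioi_exp_neg_mul_sub_div_sq {a : ℝ} (ha : 0 < a) (hc : 0 ≤ c) :
    ∫ t in Ioi 0, exp (-a * (t - c / t) ^ 2) = √(π / a) / 2 := by
  rcases hc.eq_or_lt with rfl | hc
  · simpa only [zero_div, sub_zero] using integral_gaussian_Ioi a
  rw [integral_Ioi_comp_sub_div_of_even hc (g := fun u => exp (-a * u ^ 2))
    (integrable_exp_neg_mul_sq ha) (fun u => by simp only [neg_sq]), integral_gaussian,
    smul_eq_mul, inv_mul_eq_div]

lemma integral_Ioi_comp_sq (f : ℝ → E) :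
    ∫ t in Ioi 0, (2 * t) • f (t ^ 2) = ∫ ν in Ioi 0, f ν := by
  rw [← integral_comp_rpow_Ioi f two_ne_zero]
  refine setIntegral_congr_fun measurableSet_Ioi fun t _ => ?_
  norm_num [Real.rpow_natCast]

end

theorem laplace_as_gaussian_variance_mixture (α x μ : ℝ) (hα : 0 < α) :
    (1 / α) * Real.exp (-α * |x - μ|)
      = ∫ ν in Ioi (0 : ℝ),
          (1 / Real.sqrt (2 * π * ν)) *
            Real.exp (-((x - μ) ^ 2 / (2 * ν) + α ^ 2 * ν / 2)) := by
  set b := |x - μ|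
  set F : ℝ → ℝ := fun ν => 1 / √(2 * π * ν) * exp (-((x - μ) ^ 2 / (2 * ν) + α ^ 2 * ν / 2))
  -- completing the square in the exponent after substituting `ν = t ^ 2`
  have hF_sq (t : ℝ) (ht : 0 < t) :
      (2 * t) • F (t ^ 2)
        = 2 / √(2 * π) * exp (-α * b) * exp (-(α ^ 2 / 2) * (t - b / α / t) ^ 2) := by
    have hexp : -((x - μ) ^ 2 / (2 * t ^ 2) + α ^ 2 * t ^ 2 / 2)
        = -α * b + -(α ^ 2 / 2) * (t - b / α / t) ^ 2 := by
      rw [← sq_abs]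
      field_simp
      ring
    simp only [F, smul_eq_mul]
    rw [hexp, exp_add, sqrt_mul (by positivity), sqrt_sq ht.le]
    field_simp
  calc (1 / α) * exp (-α * b)
      = 2 / √(2 * π) * exp (-α * b) * (√(π / (α ^ 2 / 2)) / 2) := by
        rw [show π / (α ^ 2 / 2) = 2 * π / α ^ 2 by ring, sqrt_div (by positivity),
          sqrt_sq hα.le]
        field_simp
    _ = ∫ t in Ioi 0,
          2 / √(2 * π) * exp (-α * b) * exp (-(α ^ 2 / 2) * (t - b / α / t) ^ 2) := by
        rw [integral_const_mul,
          integral_Ioi_exp_neg_mul_sub_div_sq (by positivity) (by positivity)]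
    _ = ∫ ν in Ioi 0, F ν := by
        rw [← integral_Ioi_comp_sq F]
        exact setIntegral_congr_fun measurableSet_Ioi fun t ht => (hF_sq t ht).symm
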